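/- Let λ ∈ ℂ with λ ≠ 0 and let f be a function holomorphic near λ and near conj(λ) satisfying conj(f^{(j)}(λ)) = f^{(j)}(conj(λ)) for all j ≤ k−1. Then f applied (as a primary matrix function) to the real Jordan block C_k(λ) is the real 2k×2k block upper triangular Toeplitz matrix with blocks C(f^{(j)}(λ)/j!) on the jth block superdiagonal, where C(μ) = [[Re μ, Im μ], [−Im μ, Re μ]]. -/

import Mathlib

open Matrix

/-- The 2×2 block `C(μ) = [[Re μ, Im μ], [−Im μ, Re μ]]` (with real entries,
viewed in `ℂ`). -/
def Cblk (z : ℂ) : Matrix (Fin 2) (Fin 2) ℂ :=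
  !![(z.re : ℂ), (z.im : ℂ); -(z.im : ℂ), (z.re : ℂ)]

/-- `S = [[−i, −i], [1, −1]]`. -/
def Smat : Matrix (Fin 2) (Fin 2) ℂ := !![-Complex.I, -Complex.I; 1, -1]

/-- `S_k = ⊕_{i=1}^k S`. -/
def Sk (k : ℕ) : Matrix (Fin k × Fin 2) (Fin k × Fin 2) ℂ :=
  Matrix.of fun p q => if p.1 = q.1 then Smat p.2 q.2 else 0

/-- The perfect-shuffle permutation matrix `P_k`. -/
def Pmat (k : ℕ) : Matrix (Fin k × Fin 2) (Fin k ⊕ Fin k) ℂ :=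
  Matrix.of fun p q =>
    match q with
    | Sum.inl i => if p = (i, 0) then 1 else 0
    | Sum.inr i => if p = (i, 1) then 1 else 0

/-- `f(J_k(μ))`: the upper triangular Toeplitz matrix with `f^{(j)}(μ)/j!` on
the `j`th superdiagonal, the value of a primary matrix function on the Jordan
block `J_k(μ)`. -/
noncomputable def fJordan (k : ℕ) (f : ℂ → ℂ) (μ : ℂ) : Matrix (Fin k) (Fin k) ℂ :=
  Matrix.of fun i j =>
    if (i : ℕ) ≤ (j : ℕ) then
      iteratedDeriv ((j : ℕ) - (i : ℕ)) f μ / (Nat.factorial ((j : ℕ) - (i : ℕ)) : ℂ)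
    else 0

/-! Conjugating by the perfect shuffle `P_k` turns `f(J_k(λ)) ⊕ f(J_k(conj λ))` into the k×k block
matrix whose `(i, j)` block is `diag(a, b)` with `a = f(J_k(λ))ᵢⱼ` and `b = f(J_k(conj λ))ᵢⱼ`; the
hypothesis on the derivatives says `b = conj a`. Conjugation by the block diagonal `S_k` acts
blockwise, and `S · diag(a, conj a) · S⁻¹ = C(a)` because `S` intertwines the two. -/

open ComplexConjugate

lemma isUnit_det_Smat : IsUnit Smat.det := by
  simp [Smat, det_fin_two, ← two_mul, Complex.I_ne_zero]

lemma Smat_mul_diag_mul_Smat_inv (a : ℂ) :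
    Smat * !![a, 0; 0, conj a] * Smat⁻¹ = Cblk a := by
  have hS : Smat * !![a, 0; 0, conj a] = Cblk a * Smat := by
    ext i j
    fin_cases i <;> fin_cases j <;>
      apply Complex.ext <;> simp [Smat, Cblk, mul_apply, Fin.sum_univ_two]
  rw [hS, mul_nonsing_inv_cancel_right _ _ isUnit_det_Smat]

lemma Cblk_zero : Cblk 0 = 0 := by
  ext i j; fin_cases i <;> fin_cases j <;> simp [Cblk]

lemma Sk_eq_comp (k : ℕ) : Sk k = comp _ _ _ _ _ (diagonal fun _ : Fin k => Smat) := by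
  ext ⟨i, s⟩ ⟨j, t⟩
  by_cases h : i = j <;> simp [Sk, h]

lemma Sk_inv_eq_comp (k : ℕ) :
    (Sk k)⁻¹ = comp _ _ _ _ _ (diagonal fun _ : Fin k => Smat⁻¹) := by
  refine inv_eq_right_inv ?_
  rw [Sk_eq_comp, ← compRingEquiv_apply, ← compRingEquiv_apply, ← map_mul, diagonal_mul_diagonal,
    mul_nonsing_inv _ isUnit_det_Smat, diagonal_one, map_one]

lemma Pmat_mul_fromBlocks_mul_transpose {k : ℕ} (A B C D : Matrix (Fin k) (Fin k) ℂ) :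
    Pmat k * fromBlocks A B C D * (Pmat k)ᵀ
      = comp _ _ _ _ _ (of fun i j => !![A i j, B i j; C i j, D i j]) := by
  ext ⟨i, s⟩ ⟨j, t⟩
  fin_cases s <;> fin_cases t <;> simp [mul_apply, Pmat, Fintype.sum_sum_type, Prod.ext_iff]

lemma fJordan_conj {k : ℕ} {f : ℂ → ℂ} {z : ℂ}
    (hconj : ∀ j < k, conj (iteratedDeriv j f z) = iteratedDeriv j f (conj z)) :
    fJordan k f (conj z) = (fJordan k f z).map conj := by
  ext i j
  simp only [fJordan, of_apply, map_apply]
  split_ifs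
  · rw [map_div₀, map_natCast, hconj _ (by omega)]
  · simp

theorem stmt_19_general (k : ℕ) (z : ℂ) (f : ℂ → ℂ)
    (hconj : ∀ j < k,
      starRingEnd ℂ (iteratedDeriv j f z) = iteratedDeriv j f (starRingEnd ℂ z)) :
    Sk k * Pmat k
        * Matrix.fromBlocks (fJordan k f z) 0 0 (fJordan k f (starRingEnd ℂ z))
        * (Pmat k)ᵀ * (Sk k)⁻¹
      = Matrix.of (fun p q : Fin k × Fin 2 =>
          if (p.1 : ℕ) ≤ (q.1 : ℕ) then
            Cblk (iteratedDeriv ((q.1 : ℕ) - (p.1 : ℕ)) f z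
              / (Nat.factorial ((q.1 : ℕ) - (p.1 : ℕ)) : ℂ)) p.2 q.2
          else 0) := by
  have hblocks : Sk k * Pmat k * fromBlocks (fJordan k f z) 0 0 (fJordan k f (conj z))
        * (Pmat k)ᵀ * (Sk k)⁻¹
      = comp _ _ _ _ _ (of fun i j => Cblk (fJordan k f z i j)) := by
    rw [Matrix.mul_assoc (Sk k), Matrix.mul_assoc (Sk k), Pmat_mul_fromBlocks_mul_transpose,
      fJordan_conj hconj, Sk_inv_eq_comp, Sk_eq_comp]
    simp only [← compRingEquiv_apply, ← map_mul]
    congr 1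
    ext i j : 1
    rw [mul_diagonal, diagonal_mul, of_apply, of_apply, map_apply, Matrix.zero_apply]
    exact Smat_mul_diag_mul_Smat_inv _
  rw [hblocks]
  ext ⟨i, s⟩ ⟨j, t⟩
  simp only [comp_apply, of_apply, fJordan]
  split_ifs <;> simp [Cblk_zero]

/-- for `λ ≠ 0` and `f` holomorphic near `λ` and `conj λ` with
`conj (f^{(j)}(λ)) = f^{(j)}(conj λ)` for `j ≤ k−1`, the primary matrix function
`f(C_k(λ)) = S_k·P_k·(f(J_k(λ)) ⊕ f(J_k(conj λ)))·(S_k·P_k)⁻¹` equals the real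
block upper triangular Toeplitz matrix with blocks `C(f^{(j)}(λ)/j!)` on the
`j`th block superdiagonal. -/
theorem stmt_19 (k : ℕ) (z : ℂ) (hz : z ≠ 0) (f : ℂ → ℂ)
    (hf₁ : AnalyticAt ℂ f z) (hf₂ : AnalyticAt ℂ f (starRingEnd ℂ z))
    (hconj : ∀ j < k,
      starRingEnd ℂ (iteratedDeriv j f z) = iteratedDeriv j f (starRingEnd ℂ z)) :
    Sk k * Pmat k
        * Matrix.fromBlocks (fJordan k f z) 0 0 (fJordan k f (starRingEnd ℂ z))
        * (Pmat k)ᵀ * (Sk k)⁻¹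
      = Matrix.of (fun p q : Fin k × Fin 2 =>
          if (p.1 : ℕ) ≤ (q.1 : ℕ) then
            Cblk (iteratedDeriv ((q.1 : ℕ) - (p.1 : ℕ)) f z
              / (Nat.factorial ((q.1 : ℕ) - (p.1 : ℕ)) : ℂ)) p.2 q.2
          else 0) :=
  stmt_19_general k z f hconj
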